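/- arXiv:1004.3832 — 10 statements merged into one kernel-verified Lean document; each statement's English description precedes it below -/
import Mathlib

section
/- Let X be a complex vector space and A, A' linear operators on X. Suppose that for every vector x and functional f with f(x)=1, we have f(Ax)=0 if and only if f(A'x)=0. Then A' = λA for some scalar λ. -/
/-!
Pairs `(x, f)` with `f x = 1` are plentiful: given `x ≠ 0`, every functional is a difference of
two functionals taking the value `1` at `x`. Hence the hypothesis forces `A' x` to lie on the line
through `A x` for every `x`, and a linear map that is pointwise proportional to `A` is a scalar
multiple of `A`, by comparing the scalars at `x`, `y` and `x + y`.
-/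

open Module Submodule

section

variable {K V W : Type*} [Field K] [AddCommGroup V] [Module K V] [AddCommGroup W] [Module K W]

theorem Module.eq_zero_of_forall_dual_eq_one {x v : V} (hx : x ≠ 0)
    (h : ∀ f : Dual K V, f x = 1 → f v = 0) : v = 0 := by
  obtain ⟨g, hg⟩ := Projective.exists_dual_eq_one K hx
  refine (forall_dual_apply_eq_zero_iff K v).mp fun φ => ?_
  have h₁ := h (g + φ - φ x • g) (by simp [hg])
  have h₂ := h g hg
  simp only [LinearMap.sub_apply, LinearMap.add_apply, LinearMap.smul_apply, smul_eq_mul] at h₁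
  linear_combination h₁ - (1 - φ x) * h₂

theorem Submodule.mem_of_forall_dual_eq_one {p : Submodule K V} {x v : V} (hx : x ∉ p)
    (h : ∀ f : Dual K V, f x = 1 → p ≤ LinearMap.ker f → f v = 0) : v ∈ p := by
  rw [← Quotient.mk_eq_zero]
  refine eq_zero_of_forall_dual_eq_one (K := K) (x := p.mkQ x) (by simpa using hx) fun g hg => ?_
  exact h (g ∘ₗ p.mkQ) hg fun w hw => by simp [(Quotient.mk_eq_zero p).mpr hw]

theorem mem_span_singleton_of_forall_dual_eq_one {x u v : V} (hx : x ≠ 0)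
    (h : ∀ f : Dual K V, f x = 1 → (f u = 0 ↔ f v = 0)) : v ∈ K ∙ u := by
  have mem_of_notMem : ∀ {u v : V}, (∀ f : Dual K V, f x = 1 → f u = 0 → f v = 0) →
      x ∉ K ∙ u → v ∈ K ∙ u := fun hf hxu =>
    mem_of_forall_dual_eq_one hxu fun f hfx hker =>
      hf f hfx ((span_singleton_le_iff_mem _ _).mp hker)
  by_cases hxu : x ∈ K ∙ u
  · have hxv : x ∈ K ∙ v := by
      by_contra hxv
      have huv := mem_of_notMem (fun f hfx => (h f hfx).2) hxv
      exact hxv (span_singleton_le_iff_mem _ _ |>.mpr huv hxu)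
    obtain ⟨b, rfl⟩ := mem_span_singleton.mp hxv
    have hb : IsUnit b := (left_ne_zero_of_smul hx).isUnit
    rw [← span_singleton_le_iff_mem, span_singleton_smul_eq hb] at hxu
    exact hxu (mem_span_singleton_self v)
  · exact mem_of_notMem (fun f hfx => (h f hfx).1) hxu

theorem LinearMap.exists_eq_smul_of_forall_mem_span_singleton {A B : V →ₗ[K] W}
    (h : ∀ x, B x ∈ K ∙ A x) : ∃ c : K, B = c • A := by
  have ker_le : ∀ x, A x = 0 → B x = 0 := fun x hx => by simpa [hx] using h x
  by_cases hA : ∀ x, A x = 0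
  · exact ⟨0, ext fun x => by simp [ker_le x (hA x)]⟩
  push Not at hA
  obtain ⟨x₀, hx₀⟩ := hA
  obtain ⟨c, hc⟩ := mem_span_singleton.mp (h x₀)
  refine ⟨c, ext fun y => ?_⟩
  by_cases hdep : A y ∈ K ∙ A x₀
  · obtain ⟨γ, hγ⟩ := mem_span_singleton.mp hdep
    have hB := ker_le (y - γ • x₀) (by simp [hγ])
    rw [map_sub, map_smul, sub_eq_zero] at hB
    rw [smul_apply, hB, ← hc, ← hγ, smul_comm]
  · have hli : LinearIndependent K ![A x₀, A y] :=
      (LinearIndependent.pair_iff' hx₀).mpr fun a ha => hdep (mem_span_singleton.mpr ⟨a, ha⟩)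
    obtain ⟨d, hd⟩ := mem_span_singleton.mp (h y)
    obtain ⟨e, he⟩ := mem_span_singleton.mp (h (x₀ + y))
    rw [map_add, map_add, ← hc, ← hd] at he
    obtain ⟨hec, hed⟩ := LinearIndependent.pair_iff.mp hli (e - c) (e - d) (by
      rw [sub_smul, sub_smul]
      linear_combination (norm := module) he)
    rw [smul_apply, ← hd, ← sub_eq_zero.mp hed, sub_eq_zero.mp hec]

end

theorem stmt_0 (X : Type*) [AddCommGroup X] [Module ℂ X]
    (A A' : X →ₗ[ℂ] X)
    (h : ∀ (x : X) (f : X →ₗ[ℂ] ℂ), f x = 1 → (f (A x) = 0 ↔ f (A' x) = 0)) :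
    ∃ lam : ℂ, A' = lam • A := by
  refine LinearMap.exists_eq_smul_of_forall_mem_span_singleton fun x => ?_
  rcases eq_or_ne x 0 with rfl | hx
  · simp
  · exact mem_span_singleton_of_forall_dual_eq_one hx (h x)
end

section
/- Let X = ℂ^n with n ≥ 2, and A an n×n complex matrix. If for every rank-one idempotent B = x⊗f (with f(x)=1), spectrum(AB + BA) = {0}, then A = 0. -/
/-!
The trace is the sum of the eigenvalues, so `AB + BA` has trace zero for every rank-one idempotent
`B = x ⊗ f`. Since `tr (A (x ⊗ f)) = tr ((x ⊗ f) A) = f (A x)`, this says `f (A x) = 0` whenever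
`f x = 1`. Testing with `x = eⱼ` and `f = eᵢ` or `f = eᵢ + eⱼ` gives every entry of `A`.
-/

namespace Matrix

variable {n : Type*} [Fintype n]

theorem trace_eq_zero_of_spectrum_subset_zero {K : Type*} [Field K] [IsAlgClosed K]
    [DecidableEq n] {A : Matrix n n K} (h : spectrum K A ⊆ {0}) : A.trace = 0 := by
  rw [trace_eq_sum_roots_charpoly]
  refine Multiset.sum_eq_zero fun μ hμ => ?_
  exact h (mem_spectrum_iff_isRoot_charpoly.mpr (Polynomial.isRoot_of_mem_roots hμ))

theorem trace_mul_vecMulVec_add_vecMulVec_mul {R : Type*} [CommSemiring R]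
    (A : Matrix n n R) (x f : n → R) :
    (A * vecMulVec x f + vecMulVec x f * A).trace = 2 * (f ⬝ᵥ (A *ᵥ x)) := by
  rw [trace_add, mul_vecMulVec, vecMulVec_mul, trace_vecMulVec, trace_vecMulVec,
    dotProduct_comm x, ← dotProduct_mulVec, dotProduct_comm (A *ᵥ x), two_mul]

theorem eq_zero_of_dotProduct_mulVec_eq_zero {R : Type*} [CommSemiring R] [DecidableEq n]
    {A : Matrix n n R} (h : ∀ x f : n → R, f ⬝ᵥ x = 1 → f ⬝ᵥ (A *ᵥ x) = 0) : A = 0 := by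
  have diag : ∀ i, A i i = 0 := fun i => by
    simpa using h (Pi.single i 1) (Pi.single i 1) (by simp)
  ext i j
  rcases eq_or_ne i j with rfl | hij
  · exact diag i
  · have hentry := h (Pi.single j 1) (Pi.single i 1 + Pi.single j 1) (by simp [hij])
    simp only [mulVec_single_one, add_dotProduct, single_dotProduct, one_mul] at hentry
    simpa [diag j] using hentry

end Matrix

open Matrix in
theorem stmt_2_general (n : ℕ) (A : Matrix (Fin n) (Fin n) ℂ)
    (h : ∀ (x f : Fin n → ℂ), f ⬝ᵥ x = 1 →
      spectrum ℂ (A * Matrix.vecMulVec x f + Matrix.vecMulVec x f * A) = {0}) :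
    A = 0 := by
  refine eq_zero_of_dotProduct_mulVec_eq_zero fun x f hfx => ?_
  have htrace := trace_eq_zero_of_spectrum_subset_zero (h x f hfx).subset
  rw [trace_mul_vecMulVec_add_vecMulVec_mul] at htrace
  simpa using htrace

open Matrix in
theorem stmt_2 (n : ℕ) (hn : 2 ≤ n) (A : Matrix (Fin n) (Fin n) ℂ)
    (h : ∀ (x f : Fin n → ℂ), f ⬝ᵥ x = 1 →
      spectrum ℂ (A * Matrix.vecMulVec x f + Matrix.vecMulVec x f * A) = {0}) :
    A = 0 :=
  stmt_2_general n A h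
end

section
/- Let A be an n×n complex matrix and P = x⊗f a rank-one idempotent (f(x)=1). Then the matrix AP + PA has a nonzero repeated eigenvalue if and only if f(Ax) ≠ 0 and f(A²x) = 0. -/
/-!
With `a = f(Ax)` and `b = f(A²x)`, the matrix `AP + PA = (Ax)⊗f + x⊗(fA)` factors as `UV` with
`U = [Ax | x]` of size `n × 2` and `V = [f; fA]` of size `2 × n`. The nonzero eigenvalues of `UV`
and `VU`, counted with multiplicity, agree, and since `f(x) = 1` the `2 × 2` matrix `VU` is
`[[a, 1], [b, a]]`, with characteristic polynomial `(X - a)² - b`. Its only possible double root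
is `a`, which is one exactly when `b = 0`.
-/

open Matrix Polynomial

theorem count_roots_charpoly_mul_comm {R m n : Type*} [CommRing R] [IsDomain R] [DecidableEq R]
    [Fintype m] [DecidableEq m] [Fintype n] [DecidableEq n]
    (A : Matrix m n R) (B : Matrix n m R) {μ : R} (hμ : μ ≠ 0) :
    (A * B).charpoly.roots.count μ = (B * A).charpoly.roots.count μ := by
  -- the powers of `X` in `charpoly_mul_comm'` only contribute roots at `0`
  have h := congrArg (fun p : R[X] => p.roots.count μ) (charpoly_mul_comm' A B)
  simpa [roots_mul, (monic_X_pow _).mul (charpoly_monic _) |>.ne_zero, hμ] using h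

theorem mul_vecMulVec_add_vecMulVec_mul {R n : Type*} [Semiring R] [Fintype n]
    (A : Matrix n n R) (x f : n → R) :
    A * vecMulVec x f + vecMulVec x f * A = (of ![A *ᵥ x, x])ᵀ * of ![f, f ᵥ* A] := by
  ext i j
  simp [mul_vecMulVec, vecMulVec_mul, mul_apply, Fin.sum_univ_two, vecMulVec_apply]

theorem of_mul_transpose_of_fin_two {R n : Type*} [NonUnitalNonAssocSemiring R] [Fintype n]
    (f g u v : n → R) :
    of ![f, g] * (of ![u, v])ᵀ = !![f ⬝ᵥ u, f ⬝ᵥ v; g ⬝ᵥ u, g ⬝ᵥ v] := by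
  ext i j
  fin_cases i <;> fin_cases j <;> rfl

theorem charpoly_fin_two_eq_sq_sub {R : Type*} [CommRing R] [Nontrivial R] (a b : R) :
    (!![a, 1; b, a]).charpoly = (X - C a) ^ 2 - C b := by
  rw [charpoly_fin_two, trace_fin_two, det_fin_two]
  simp only [of_apply, cons_val', cons_val_zero, cons_val_one, empty_val', cons_val_fin_one,
    map_add, map_sub, map_mul, map_one]
  ring

theorem two_le_rootMultiplicity_sq_sub_C_iff {R : Type*} [CommRing R] [IsDomain R]
    [NeZero (2 : R)] {a b μ : R} :
    2 ≤ ((X - C a) ^ 2 - C b).rootMultiplicity μ ↔ μ = a ∧ b = 0 := by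
  have hp : ((X - C a) ^ 2 - C b).Monic :=
    ((monic_X_sub_C a).pow 2).sub_of_left <| by
      rw [degree_pow, degree_X_sub_C]; exact degree_C_le.trans_lt (by norm_num)
  change 1 < _ ↔ _
  rw [one_lt_rootMultiplicity_iff_isRoot hp.ne_zero]
  simp only [IsRoot.def, eval_sub, eval_pow, eval_X, eval_C, sub_eq_zero, derivative_sub,
    derivative_pow, Nat.cast_ofNat, Nat.add_one_sub_one, pow_one, derivative_X, derivative_C,
    sub_zero, mul_one, eval_mul, mul_eq_zero, two_ne_zero, false_or]
  constructor <;> rintro ⟨h, rfl⟩ <;> simp_all [eq_comm]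

open Matrix in
theorem stmt_3 (n : ℕ) (A : Matrix (Fin n) (Fin n) ℂ) (x f : Fin n → ℂ)
    (hxf : f ⬝ᵥ x = 1) :
    (∃ μ : ℂ, μ ≠ 0 ∧
        2 ≤ (A * Matrix.vecMulVec x f + Matrix.vecMulVec x f * A).charpoly.roots.count μ)
      ↔ f ⬝ᵥ A.mulVec x ≠ 0 ∧ f ⬝ᵥ (A ^ 2).mulVec x = 0 := by
  set a := f ⬝ᵥ A *ᵥ x
  set b := f ⬝ᵥ (A ^ 2) *ᵥ x
  have hcompress : of ![f, f ᵥ* A] * (of ![A *ᵥ x, x])ᵀ = !![a, 1; b, a] := by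
    rw [of_mul_transpose_of_fin_two, hxf, ← dotProduct_mulVec, ← dotProduct_mulVec,
      mulVec_mulVec, ← pow_two]
  have hcount (μ : ℂ) (hμ : μ ≠ 0) :
      (A * vecMulVec x f + vecMulVec x f * A).charpoly.roots.count μ
        = ((X - C a) ^ 2 - C b).rootMultiplicity μ := by
    rw [mul_vecMulVec_add_vecMulVec_mul, count_roots_charpoly_mul_comm _ _ hμ, hcompress,
      charpoly_fin_two_eq_sq_sub, count_roots]
  constructor
  · rintro ⟨μ, hμ, h2⟩
    obtain ⟨rfl, hb⟩ := two_le_rootMultiplicity_sq_sub_C_iff.mp (hcount μ hμ ▸ h2)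
    exact ⟨hμ, hb⟩
  · rintro ⟨ha, hb⟩
    exact ⟨a, ha, hcount a ha ▸ two_le_rootMultiplicity_sq_sub_C_iff.mpr ⟨rfl, hb⟩⟩
end

section
/- Let A be an n×n complex matrix and P = x⊗f a rank-one idempotent (f(x)=1). Then AP + PA has two distinct nonzero eigenvalues if and only if f(A²x) ≠ 0 and f(A²x) ≠ (f(Ax))². -/
/-!
The matrix `A P + P A` acts as `v ↦ f(v) • A x + f(A v) • x`. Testing an eigen-equation with
nonzero eigenvalue `t` against `f` and `f ∘ A` forces `(t - a)² = b`, where `a = f(A x)` and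
`b = f(A² x)`; conversely, for `s² = b` the vector `A x + s x` is an eigenvector for `a + s`.
So the nonzero eigenvalues are exactly the nonzero roots of `(t - a)² = b`, and there are two
of them precisely when `b ≠ 0` (the roots `a ± √b` differ) and `b ≠ a²` (neither root is `0`).
-/

open Matrix

theorem Matrix.mem_spectrum_iff_exists_mulVec_eq_smul {K ι : Type*} [Field K] [Fintype ι]
    [DecidableEq ι] (M : Matrix ι ι K) (μ : K) :
    μ ∈ spectrum K M ↔ ∃ v ≠ 0, M *ᵥ v = μ • v := by
  rw [← spectrum_toLin', ← Module.End.hasEigenvalue_iff_mem_spectrum]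
  constructor
  · intro h
    obtain ⟨v, hv, hv0⟩ := h.exists_hasEigenvector
    exact ⟨v, hv0, Module.End.mem_eigenspace_iff.1 hv⟩
  · rintro ⟨v, hv0, hv⟩
    exact Module.End.hasEigenvalue_of_hasEigenvector ⟨Module.End.mem_eigenspace_iff.2 hv, hv0⟩

theorem Matrix.anticommutator_vecMulVec_mulVec {R ι : Type*} [CommSemiring R] [Fintype ι]
    (A : Matrix ι ι R) (x f v : ι → R) :
    (A * vecMulVec x f + vecMulVec x f * A) *ᵥ v = (f ⬝ᵥ v) • A *ᵥ x + (f ⬝ᵥ A *ᵥ v) • x := by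
  rw [add_mulVec, mul_vecMulVec, vecMulVec_mul, vecMulVec_mulVec, vecMulVec_mulVec,
    op_smul_eq_smul, op_smul_eq_smul, ← dotProduct_mulVec]

section AnticommutatorRankOne

variable {K ι : Type*} [Field K] [Fintype ι] [DecidableEq ι] (A : Matrix ι ι K) {x f : ι → K}

theorem Matrix.sq_sub_eq_of_mem_spectrum_anticommutator_vecMulVec (hxf : f ⬝ᵥ x = 1)
    {t : K} (ht : t ≠ 0) (htM : t ∈ spectrum K (A * vecMulVec x f + vecMulVec x f * A)) :
    (t - f ⬝ᵥ A *ᵥ x) ^ 2 = f ⬝ᵥ (A ^ 2) *ᵥ x := by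
  obtain ⟨v, hv0, hv⟩ := (mem_spectrum_iff_exists_mulVec_eq_smul _ t).1 htM
  rw [anticommutator_vecMulVec_mulVec] at hv
  have hf := congrArg (f ⬝ᵥ ·) hv
  have hfA := congrArg (f ⬝ᵥ A *ᵥ ·) hv
  simp only [dotProduct_add, dotProduct_smul, mulVec_add, mulVec_smul, mulVec_mulVec, hxf,
    smul_eq_mul] at hf hfA
  have hp : f ⬝ᵥ v ≠ 0 := by
    intro hp
    have hq : f ⬝ᵥ A *ᵥ v = 0 := by simpa [hp] using hf
    rw [hp, hq, zero_smul, zero_smul, add_zero, eq_comm, smul_eq_zero] at hv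
    exact hv.elim ht hv0
  apply mul_left_cancel₀ hp
  rw [pow_two A]
  linear_combination -(t - f ⬝ᵥ A *ᵥ x) * hf - hfA

theorem Matrix.mulVec_anticommutator_vecMulVec_eq_smul (hxf : f ⬝ᵥ x = 1) {s : K}
    (hs : s ^ 2 = f ⬝ᵥ (A ^ 2) *ᵥ x) :
    (A * vecMulVec x f + vecMulVec x f * A) *ᵥ (A *ᵥ x + s • x) =
      (f ⬝ᵥ A *ᵥ x + s) • (A *ᵥ x + s • x) := by
  rw [anticommutator_vecMulVec_mulVec, mulVec_add, mulVec_smul, mulVec_mulVec, ← pow_two,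
    dotProduct_add, dotProduct_add, dotProduct_smul, dotProduct_smul, hxf, ← hs, smul_add,
    smul_smul, smul_eq_mul, smul_eq_mul, mul_one]
  congr 2
  ring

theorem Matrix.mem_spectrum_anticommutator_vecMulVec_iff (hxf : f ⬝ᵥ x = 1) {t : K}
    (ht : t ≠ 0) :
    t ∈ spectrum K (A * vecMulVec x f + vecMulVec x f * A) ↔
      (t - f ⬝ᵥ A *ᵥ x) ^ 2 = f ⬝ᵥ (A ^ 2) *ᵥ x := by
  refine ⟨sq_sub_eq_of_mem_spectrum_anticommutator_vecMulVec A hxf ht, fun hs => ?_⟩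
  rw [mem_spectrum_iff_exists_mulVec_eq_smul]
  refine ⟨A *ᵥ x + (t - f ⬝ᵥ A *ᵥ x) • x, fun h0 => ht ?_, ?_⟩
  · simpa [hxf] using congrArg (f ⬝ᵥ ·) h0
  · simpa using mulVec_anticommutator_vecMulVec_eq_smul A hxf hs

end AnticommutatorRankOne

theorem exists_two_ne_zero_sq_sub_eq_iff {K : Type*} [Field K] [IsAlgClosed K] [NeZero (2 : K)]
    (a b : K) :
    (∃ μ ν : K, μ ≠ ν ∧ μ ≠ 0 ∧ ν ≠ 0 ∧ (μ - a) ^ 2 = b ∧ (ν - a) ^ 2 = b) ↔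
      b ≠ 0 ∧ b ≠ a ^ 2 := by
  constructor
  · rintro ⟨μ, ν, hμν, hμ, hν, hμa, hνa⟩
    refine ⟨fun hb => hμν ?_, fun hb => hμν ?_⟩
    · rw [hb, sq_eq_zero_iff, sub_eq_zero] at hμa hνa
      rw [hμa, hνa]
    · have root_eq : ∀ t : K, t ≠ 0 → (t - a) ^ 2 = a ^ 2 → t = 2 * a := by
        intro t ht hta
        rcases sq_eq_sq_iff_eq_or_eq_neg.1 hta with h | h
        · linear_combination h
        · exact absurd (by linear_combination h) ht
      rw [hb] at hμa hνa
      rw [root_eq μ hμ hμa, root_eq ν hν hνa]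
  · rintro ⟨hb0, hba⟩
    obtain ⟨c, hc⟩ := IsAlgClosed.exists_pow_nat_eq b two_pos
    have hc0 : c ≠ 0 := by rintro rfl; exact hb0 (by simp [← hc])
    refine ⟨a + c, a - c, fun h => hc0 ?_, fun h => hba ?_, fun h => hba ?_, ?_, ?_⟩
    · simpa [two_ne_zero] using (by linear_combination h : (2 : K) * c = 0)
    · rw [← hc, eq_neg_of_add_eq_zero_right h, neg_sq]
    · rw [← hc, (sub_eq_zero.1 h).symm]
    · rw [← hc]; ring
    · rw [← hc]; ring

open Matrix in
theorem stmt_4 (n : ℕ) (A : Matrix (Fin n) (Fin n) ℂ) (x f : Fin n → ℂ)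
    (hxf : f ⬝ᵥ x = 1) :
    (∃ μ ν : ℂ, μ ≠ ν ∧ μ ≠ 0 ∧ ν ≠ 0 ∧
        μ ∈ spectrum ℂ (A * Matrix.vecMulVec x f + Matrix.vecMulVec x f * A) ∧
        ν ∈ spectrum ℂ (A * Matrix.vecMulVec x f + Matrix.vecMulVec x f * A))
      ↔ f ⬝ᵥ (A ^ 2).mulVec x ≠ 0 ∧ f ⬝ᵥ (A ^ 2).mulVec x ≠ (f ⬝ᵥ A.mulVec x) ^ 2 := by
  rw [← exists_two_ne_zero_sq_sub_eq_iff]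
  exact exists₂_congr fun μ ν => and_congr_right' <| and_congr_right fun hμ =>
    and_congr_right fun hν => and_congr (mem_spectrum_anticommutator_vecMulVec_iff A hxf hμ)
      (mem_spectrum_anticommutator_vecMulVec_iff A hxf hν)
end

section
/- Let A be an n×n complex matrix of rank two with A² = 0 (n ≥ 4) and s a positive integer. Then for every n×n complex matrix B, the matrix AB^s + B^s A has at most two distinct nonzero eigenvalues. -/
/-!
Let `A² = 0`. If `(AC + CA) v = μ v` with `v ≠ 0`, then either `A v = 0` and `v` is an eigenvector
of `AC`, or `A v ≠ 0` and applying `A` gives `(AC)(A v) = μ (A v)`. So every eigenvalue of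
`AC + CA` is one of `AC`. Eigenvectors of `AC` for distinct nonzero eigenvalues are linearly
independent vectors in the range of `AC`, whose dimension is at most `rank A = 2`.
-/

open Matrix Module

namespace Module.End

theorem hasEigenvalue_mul_of_hasEigenvalue_mul_add_mul {R M : Type*} [CommRing R]
    [AddCommGroup M] [Module R M] {f g : End R M} (hf : f * f = 0) {μ : R}
    (h : (f * g + g * f).HasEigenvalue μ) : (f * g).HasEigenvalue μ := by
  obtain ⟨v, hv⟩ := h.exists_hasEigenvector
  have hv_eq : f (g v) + g (f v) = μ • v := by simpa using hv.apply_eq_smul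
  by_cases hfv : f v = 0
  · refine hasEigenvalue_of_hasEigenvector ⟨?_, hv.2⟩
    simpa [mem_eigenspace_iff, hfv] using hv_eq
  · refine hasEigenvalue_of_hasEigenvector ⟨?_, hfv⟩
    have hffg : f (f (g v)) = 0 := by simpa using LinearMap.congr_fun hf (g v)
    rw [mem_eigenspace_iff, mul_apply, ← map_smul, ← hv_eq, map_add, hffg, zero_add]

theorem ncard_nonzero_hasEigenvalue_le_finrank_range {K V : Type*} [Field K] [AddCommGroup V]
    [Module K V] [FiniteDimensional K V] (f : End K V) :
    {μ | f.HasEigenvalue μ ∧ μ ≠ 0}.ncard ≤ finrank K (LinearMap.range f) := by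
  set S := {μ | f.HasEigenvalue μ ∧ μ ≠ 0}
  choose v hv using fun μ : S ↦ μ.2.1.exists_hasEigenvector
  have hv_range (μ : S) : v μ ∈ LinearMap.range f :=
    ⟨(μ : K)⁻¹ • v μ, by rw [map_smul, (hv μ).apply_eq_smul, inv_smul_smul₀ μ.2.2]⟩
  have hli : LinearIndependent K (fun μ ↦ (⟨v μ, hv_range μ⟩ : LinearMap.range f)) :=
    .of_comp (LinearMap.range f).subtype (f.eigenvectors_linearIndependent S v hv)
  have := hli.finite
  have := Fintype.ofFinite S
  rw [← Nat.card_coe_set_eq, Nat.card_eq_fintype_card]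
  exact hli.fintype_card_le_finrank

end Module.End

namespace Matrix

variable {K n : Type*} [Field K] [Fintype n] [DecidableEq n]

theorem mem_spectrum_iff_hasEigenvalue_toLin' {M : Matrix n n K} {μ : K} :
    μ ∈ spectrum K M ↔ End.HasEigenvalue (toLin' M) μ := by
  rw [End.hasEigenvalue_iff_mem_spectrum, ← AlgEquiv.spectrum_eq toLinAlgEquiv']
  rfl

theorem mem_spectrum_mul_of_mem_spectrum_mul_add_mul {A C : Matrix n n K} (hA : A * A = 0)
    {μ : K} (h : μ ∈ spectrum K (A * C + C * A)) : μ ∈ spectrum K (A * C) := by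
  simp only [mem_spectrum_iff_hasEigenvalue_toLin', map_add, toLin'_mul, ← End.mul_eq_comp] at h ⊢
  refine End.hasEigenvalue_mul_of_hasEigenvalue_mul_add_mul ?_ h
  rw [End.mul_eq_comp, ← toLin'_mul, hA, map_zero]

theorem ncard_nonzero_spectrum_le_rank (M : Matrix n n K) :
    {μ | μ ∈ spectrum K M ∧ μ ≠ 0}.ncard ≤ M.rank := by
  simp_rw [mem_spectrum_iff_hasEigenvalue_toLin']
  exact End.ncard_nonzero_hasEigenvalue_le_finrank_range (toLin' M)

end Matrix

theorem stmt_6_general (n : ℕ) (A : Matrix (Fin n) (Fin n) ℂ)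
    (hA : A.rank = 2) (hA2 : A ^ 2 = 0) (s : ℕ)
    (B : Matrix (Fin n) (Fin n) ℂ) :
    {μ : ℂ | μ ∈ spectrum ℂ (A * B ^ s + B ^ s * A) ∧ μ ≠ 0}.ncard ≤ 2 := by
  have hAA : A * A = 0 := by rw [← sq, hA2]
  calc {μ : ℂ | μ ∈ spectrum ℂ (A * B ^ s + B ^ s * A) ∧ μ ≠ 0}.ncard
      ≤ {μ : ℂ | μ ∈ spectrum ℂ (A * B ^ s) ∧ μ ≠ 0}.ncard :=
        Set.ncard_le_ncard
          (fun _ hμ ↦ ⟨mem_spectrum_mul_of_mem_spectrum_mul_add_mul hAA hμ.1, hμ.2⟩)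
          ((finite_spectrum _).subset fun _ hμ ↦ hμ.1)
    _ ≤ (A * B ^ s).rank := ncard_nonzero_spectrum_le_rank _
    _ ≤ 2 := hA ▸ rank_mul_le_left A (B ^ s)

theorem stmt_6 (n : ℕ) (hn : 4 ≤ n) (A : Matrix (Fin n) (Fin n) ℂ)
    (hA : A.rank = 2) (hA2 : A ^ 2 = 0) (s : ℕ) (hs : 0 < s)
    (B : Matrix (Fin n) (Fin n) ℂ) :
    {μ : ℂ | μ ∈ spectrum ℂ (A * B ^ s + B ^ s * A) ∧ μ ≠ 0}.ncard ≤ 2 :=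
  stmt_6_general n A hA hA2 s B
end

section
/- Let P, Q be rank-one idempotent n×n complex matrices with PQ = QP = 0. Then there is no rank-one idempotent R such that both (PR + RP)/2 and (QR + RQ)/2 are rank-one idempotents. -/
/-! A rank-one matrix `M` satisfies `M N M = tr(M N) • M`. If `½(PR + RP)` is a rank-one
idempotent, taking traces gives `tr(PR) = 1`, hence `PRP = P` and `RPR = R`, and expanding the
square of `PR + RP` turns idempotency into `P + R = PR + RP`. Likewise `Q + R = QR + RQ`.
Multiplying these identities by `P` and `Q` on either side and using `PQ = QP = 0` gives
`QR = RP` and `RQ = PR`, so `Q + R = P + R`; then `P = Q` and `P = P² = PQ = 0`. -/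

def IsRankOneIdem {n : ℕ} (M : Matrix (Fin n) (Fin n) ℂ) : Prop :=
  M * M = M ∧ M.rank = 1

open Matrix

namespace Matrix

variable {K m : Type*} [Field K]

theorem exists_eq_vecMulVec_of_rank_le_one {n : Type*} [Fintype n] {M : Matrix m n K}
    (h : M.rank ≤ 1) : ∃ (u : m → K) (v : n → K), M = vecMulVec u v := by
  classical
  obtain ⟨w, hw⟩ := finrank_le_one_iff.mp h
  choose c hc using fun j =>
    hw ⟨M.col j, by simpa using LinearMap.mem_range_self M.mulVecLin (Pi.single j 1)⟩
  refine ⟨w, c, ?_⟩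
  ext i j
  simpa [vecMulVec_apply, mul_comm] using (congrFun (congrArg Subtype.val (hc j)) i).symm

theorem vecMulVec_mul_mul_vecMulVec [Fintype m] {R : Type*} [CommSemiring R] (u v : m → R)
    (N : Matrix m m R) :
    vecMulVec u v * N * vecMulVec u v = (vecMulVec u v * N).trace • vecMulVec u v := by
  ext i j
  simp only [mul_apply, vecMulVec_apply, trace, diag, smul_apply, smul_eq_mul,
    Finset.sum_mul]
  refine Finset.sum_congr rfl fun l _ => Finset.sum_congr rfl fun k _ => ?_
  ring

theorem mul_mul_self_eq_trace_smul_of_rank_le_one [Fintype m] {M : Matrix m m K} (h : M.rank ≤ 1)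
    (N : Matrix m m K) : M * N * M = (M * N).trace • M := by
  obtain ⟨u, v, rfl⟩ := exists_eq_vecMulVec_of_rank_le_one h
  exact vecMulVec_mul_mul_vecMulVec u v N

theorem trace_eq_one_of_isIdempotentElem_of_rank_eq_one [Fintype m] [DecidableEq m]
    {M : Matrix m m K} (hM : IsIdempotentElem M) (h : M.rank = 1) : M.trace = 1 := by
  have hM0 : M ≠ 0 := by rintro rfl; simp at h
  have hsandwich := mul_mul_self_eq_trace_smul_of_rank_le_one h.le 1
  rw [mul_one, hM.eq] at hsandwich
  have : (M.trace - 1) • M = 0 := by rw [sub_smul, one_smul, ← hsandwich, sub_self]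
  exact sub_eq_zero.mp ((smul_eq_zero.mp this).resolve_right hM0)

end Matrix

section Ring

variable {α : Type*} [Ring α]

theorem IsIdempotentElem.add_eq_mul_add_mul {e f : α} (he : IsIdempotentElem e)
    (hf : IsIdempotentElem f) (hefe : e * f * e = e) (hfef : f * e * f = f)
    (h : (e * f + f * e) * (e * f + f * e) = (e * f + f * e) + (e * f + f * e)) :
    e + f = e * f + f * e := by
  have hsq : (e * f + f * e) * (e * f + f * e) = (e * f + f * e) + (e + f) := by
    calc (e * f + f * e) * (e * f + f * e)
        = e * f * e * f + e * (f * f) * e + f * (e * e) * f + f * e * f * e := by noncomm_ring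
      _ = (e * f + f * e) + (e + f) := by rw [he.eq, hf.eq, hefe, hfef]; abel
  exact (add_left_cancel (h.symm.trans hsq)).symm

theorem eq_of_add_eq_mul_add_mul {p q r : α} (hp : p + r = p * r + r * p)
    (hq : q + r = q * r + r * q) (hpq : p * q = 0) (hqp : q * p = 0) : p = q := by
  have hqr : q * r = q * r * p := by
    simpa [mul_add, ← mul_assoc, hqp] using congrArg (q * ·) hp
  have hrp : r * p = q * r * p := by
    simpa [add_mul, mul_assoc, hqp] using congrArg (· * p) hq
  have hrq : r * q = p * r * q := by
    simpa [add_mul, mul_assoc, hpq] using congrArg (· * q) hp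
  have hpr : p * r = p * r * q := by
    simpa [mul_add, ← mul_assoc, hpq] using congrArg (p * ·) hq
  have : q + r = p + r := by rw [hq, hp, hqr, ← hrp, hrq, ← hpr, add_comm]
  exact (add_right_cancel this).symm

end Ring

theorem mul_self_eq_inv_smul_of_isIdempotentElem_smul {K α : Type*} [Field K] [Ring α]
    [Algebra K α] {c : K} {x : α} (hc : c ≠ 0) (h : IsIdempotentElem (c • x)) :
    x * x = c⁻¹ • x := by
  have : c • (c • (x * x)) = c • x := by rw [← h.eq, smul_mul_smul_comm, smul_smul]
  exact (eq_inv_smul_iff₀ hc).mpr (smul_right_injective α hc this)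

namespace IsRankOneIdem

variable {n : ℕ} {P R : Matrix (Fin n) (Fin n) ℂ}

theorem ne_zero (hP : IsRankOneIdem P) : P ≠ 0 := by
  rintro rfl
  simpa using hP.2

theorem trace_eq_one (hP : IsRankOneIdem P) : P.trace = 1 :=
  trace_eq_one_of_isIdempotentElem_of_rank_eq_one hP.1 hP.2

theorem add_eq_mul_add_mul (hP : IsRankOneIdem P) (hR : IsRankOneIdem R)
    (hPR : IsRankOneIdem ((1 / 2 : ℂ) • (P * R + R * P))) : P + R = P * R + R * P := by
  have htr : (P * R).trace = 1 := by
    have := hPR.trace_eq_one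
    rw [trace_smul, trace_add, trace_mul_comm R P, smul_eq_mul] at this
    linear_combination this
  have hPRP : P * R * P = P := by
    rw [mul_mul_self_eq_trace_smul_of_rank_le_one hP.2.le, htr, one_smul]
  have hRPR : R * P * R = R := by
    rw [mul_mul_self_eq_trace_smul_of_rank_le_one hR.2.le, trace_mul_comm, htr, one_smul]
  refine IsIdempotentElem.add_eq_mul_add_mul hP.1 hR.1 hPRP hRPR ?_
  rw [mul_self_eq_inv_smul_of_isIdempotentElem_smul (by norm_num) hPR.1, one_div, inv_inv,
    two_smul]

end IsRankOneIdem

theorem stmt_12 (n : ℕ) (P Q : Matrix (Fin n) (Fin n) ℂ)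
    (hP : IsRankOneIdem P) (hQ : IsRankOneIdem Q)
    (hPQ : P * Q = 0) (hQP : Q * P = 0) :
    ¬ ∃ R : Matrix (Fin n) (Fin n) ℂ, IsRankOneIdem R ∧
      IsRankOneIdem ((1 / 2 : ℂ) • (P * R + R * P)) ∧
      IsRankOneIdem ((1 / 2 : ℂ) • (Q * R + R * Q)) := by
  rintro ⟨R, hR, hPR, hQR⟩
  have hPeqQ : P = Q := eq_of_add_eq_mul_add_mul (hP.add_eq_mul_add_mul hR hPR)
    (hQ.add_eq_mul_add_mul hR hQR) hPQ hQP
  apply hP.ne_zero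
  calc P = P * Q := by rw [← hPeqQ, hP.1]
    _ = 0 := hPQ
end

section
/- Let P, Q be rank-one idempotent n×n complex matrices (n ≥ 2) with spectrum(PQ + QP) = {0} but PQ ≠ 0 or QP ≠ 0. Then there exists a rank-one idempotent R such that both (PR + RP)/2 and (QR + RQ)/2 are rank-one idempotents. -/
open Matrix

namespace Matrix

section RankOne

variable {m n K : Type*} [Fintype n] [Field K]

theorem mulVecLin_eq_zero_iff {M : Matrix m n K} : M.mulVecLin = 0 ↔ M = 0 :=
  ⟨fun h => mulVec_injective (funext fun v => by simpa using LinearMap.congr_fun h v),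
    fun h => by rw [h]; ext; simp⟩

theorem rank_eq_zero_iff {M : Matrix m n K} : M.rank = 0 ↔ M = 0 := by
  rw [rank, Submodule.finrank_eq_zero, LinearMap.range_eq_bot, mulVecLin_eq_zero_iff]

theorem rank_vecMulVec_eq_one {x : m → K} {f : n → K} (hx : x ≠ 0) (hf : f ≠ 0) :
    (vecMulVec x f).rank = 1 := by
  have h0 : (vecMulVec x f).rank ≠ 0 := by
    rw [Ne, rank_eq_zero_iff]
    obtain ⟨i, hi⟩ := Function.ne_iff.mp hx
    obtain ⟨j, hj⟩ := Function.ne_iff.mp hf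
    exact fun h => mul_ne_zero hi hj congr($h i j)
  have hle := rank_vecMulVec_le x f
  omega

theorem exists_eq_vecMulVec_of_rank_eq_one [Fintype m] {M : Matrix m n K} (hM : M.rank = 1) :
    ∃ (x : m → K) (f : n → K), M = vecMulVec x f := by
  classical
  obtain ⟨⟨x, _⟩, -, hspan⟩ := finrank_eq_one_iff'.mp (show Module.finrank K _ = 1 from hM)
  have hcol : ∀ j, ∃ c : K, c • x = M *ᵥ Pi.single j 1 := fun j =>
    (hspan ⟨_, Pi.single j 1, rfl⟩).imp fun c hc => congrArg Subtype.val hc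
  choose f hf using hcol
  refine ⟨x, f, ext fun i j => ?_⟩
  have := congrFun (hf j) i
  simp only [mulVec_single_one, Pi.smul_apply, smul_eq_mul, col_apply] at this
  rw [vecMulVec_apply, ← this, mul_comm]

end RankOne

section Square

variable {n K : Type*} [Fintype n] [Field K]

theorem dotProduct_eq_one_of_vecMulVec_mul_self {x f : n → K} (hM : vecMulVec x f ≠ 0)
    (h : vecMulVec x f * vecMulVec x f = vecMulVec x f) : f ⬝ᵥ x = 1 := by
  rw [vecMulVec_mul_vecMulVec, vecMulVec_smul] at h
  exact smul_left_injective K hM (h.trans (one_smul K _).symm)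

def jordanMul (A B : Matrix n n K) : Matrix n n K :=
  (1 / 2 : K) • (A * B + B * A)

theorem jordanMul_vecMulVec_same_right {x y f : n → K} (hx : f ⬝ᵥ x = 1)
    (hy : f ⬝ᵥ y = 1) :
    jordanMul (vecMulVec x f) (vecMulVec y f) = vecMulVec ((1 / 2 : K) • (x + y)) f := by
  rw [jordanMul, vecMulVec_mul_vecMulVec, vecMulVec_mul_vecMulVec, hx, hy, one_smul,
    ← add_vecMulVec, smul_vecMulVec]

theorem jordanMul_vecMulVec_same_left {y f g : n → K} (hf : f ⬝ᵥ y = 1)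
    (hg : g ⬝ᵥ y = 1) :
    jordanMul (vecMulVec y g) (vecMulVec y f) = vecMulVec y ((1 / 2 : K) • (g + f)) := by
  rw [jordanMul, vecMulVec_mul_vecMulVec, vecMulVec_mul_vecMulVec, hf, hg, one_smul, one_smul,
    ← vecMulVec_add, add_comm, vecMulVec_smul]

end Square

end Matrix

theorem isRankOneIdem_vecMulVec {n : ℕ} {x f : Fin n → ℂ} (h : f ⬝ᵥ x = 1) :
    IsRankOneIdem (vecMulVec x f) := by
  have hx : x ≠ 0 := by rintro rfl; simp at h
  have hf : f ≠ 0 := by rintro rfl; simp at h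
  exact ⟨by rw [vecMulVec_mul_vecMulVec, h, one_smul], rank_vecMulVec_eq_one hx hf⟩

theorem IsRankOneIdem.exists_eq_vecMulVec {n : ℕ} {M : Matrix (Fin n) (Fin n) ℂ}
    (hM : IsRankOneIdem M) : ∃ x f : Fin n → ℂ, f ⬝ᵥ x = 1 ∧ M = vecMulVec x f := by
  obtain ⟨x, f, rfl⟩ := exists_eq_vecMulVec_of_rank_eq_one hM.2
  have hne : vecMulVec x f ≠ 0 := fun h =>
    one_ne_zero (hM.2.symm.trans (Matrix.rank_eq_zero_iff.mpr h))
  exact ⟨x, f, dotProduct_eq_one_of_vecMulVec_mul_self hne hM.1, rfl⟩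

theorem exists_isRankOneIdem_jordanMul_of_mul_ne_zero {n : ℕ} {P Q : Matrix (Fin n) (Fin n) ℂ}
    (hP : IsRankOneIdem P) (hQ : IsRankOneIdem Q) (hPQ : P * Q ≠ 0) :
    ∃ R, IsRankOneIdem R ∧ IsRankOneIdem (jordanMul P R) ∧ IsRankOneIdem (jordanMul Q R) := by
  obtain ⟨x, f, hfx, rfl⟩ := hP.exists_eq_vecMulVec
  obtain ⟨y, g, hgy, rfl⟩ := hQ.exists_eq_vecMulVec
  have ha : f ⬝ᵥ y ≠ 0 := fun h =>
    hPQ (by rw [vecMulVec_mul_vecMulVec, h, zero_smul, vecMulVec_zero])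
  set a := f ⬝ᵥ y
  have hQ' : vecMulVec y g = vecMulVec (a⁻¹ • y) (a • g) := by
    rw [smul_vecMulVec, vecMulVec_smul, smul_smul, inv_mul_cancel₀ ha, one_smul]
  have hfy : f ⬝ᵥ (a⁻¹ • y) = 1 := by
    rw [dotProduct_smul, smul_eq_mul, inv_mul_cancel₀ ha]
  have hgy' : (a • g) ⬝ᵥ (a⁻¹ • y) = 1 := by
    rw [smul_dotProduct, dotProduct_smul, smul_smul, mul_inv_cancel₀ ha, one_smul, hgy]
  have half : (1 / 2 : ℂ) * (1 + 1) = 1 := by norm_num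
  refine ⟨vecMulVec (a⁻¹ • y) f, isRankOneIdem_vecMulVec hfy, ?_, ?_⟩
  · rw [jordanMul_vecMulVec_same_right hfx hfy]
    refine isRankOneIdem_vecMulVec ?_
    rw [dotProduct_smul, dotProduct_add, hfx, hfy, smul_eq_mul, half]
  · rw [hQ', jordanMul_vecMulVec_same_left hfy hgy']
    refine isRankOneIdem_vecMulVec ?_
    rw [smul_dotProduct, add_dotProduct, hgy', hfy, smul_eq_mul, half]

theorem stmt_13_general (n : ℕ) (P Q : Matrix (Fin n) (Fin n) ℂ)
    (hP : IsRankOneIdem P) (hQ : IsRankOneIdem Q)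
    (hne : P * Q ≠ 0 ∨ Q * P ≠ 0) :
    ∃ R : Matrix (Fin n) (Fin n) ℂ, IsRankOneIdem R ∧
      IsRankOneIdem ((1 / 2 : ℂ) • (P * R + R * P)) ∧
      IsRankOneIdem ((1 / 2 : ℂ) • (Q * R + R * Q)) := by
  rcases hne with hPQ | hQP
  · exact exists_isRankOneIdem_jordanMul_of_mul_ne_zero hP hQ hPQ
  · obtain ⟨R, hR, hQR, hPR⟩ := exists_isRankOneIdem_jordanMul_of_mul_ne_zero hQ hP hQP
    exact ⟨R, hR, hPR, hQR⟩

theorem stmt_13 (n : ℕ) (hn : 2 ≤ n) (P Q : Matrix (Fin n) (Fin n) ℂ)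
    (hP : IsRankOneIdem P) (hQ : IsRankOneIdem Q)
    (hspec : spectrum ℂ (P * Q + Q * P) = {0})
    (hne : P * Q ≠ 0 ∨ Q * P ≠ 0) :
    ∃ R : Matrix (Fin n) (Fin n) ℂ, IsRankOneIdem R ∧
      IsRankOneIdem ((1 / 2 : ℂ) • (P * R + R * P)) ∧
      IsRankOneIdem ((1 / 2 : ℂ) • (Q * R + R * Q)) :=
  stmt_13_general n P Q hP hQ hne
end

section
/- Let r, s be positive integers with r ≠ s, γ = 2^r, δ = 2^s, and B₁ as above (B₁^k = 2^{k−1}(2^k E + F) with E = [[1,1],[1,1]], F = [[1,−1],[−1,1]]). Let A₀ = [[1,0],[0,0]]. Then det(B₁^r A₀ B₁^s + B₁^s A₀ B₁^r) = −4^{r+s−1}(γ − δ)² < 0; in particular B₁^r A₀ B₁^s + B₁^s A₀ B₁^r has one positive and one negative eigenvalue. -/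
/-!
`B₁ = !![3, 1; 1, 3]` has eigenvalues `4` and `2` on the eigenvectors `(1, 1)` and `(1, -1)`, which
gives its powers in closed form. With `X`, `Y` symmetric of the shape `!![a, b; b, a]`, the matrix
`X A₀ Y + Y A₀ X` is `!![2ac, ad + bc; ad + bc, 2bd]`, whose determinant is `-(ad - bc)²`; for the
powers of `B₁` this is `-(γδ(γ - δ)/2)²`. A real `2 × 2` matrix with negative determinant has a
characteristic polynomial with negative constant term, hence a positive and a negative root.
-/

open Polynomial in
theorem Matrix.mem_spectrum_of_sq_sub_trace_mul_add_det {R : Type*} [CommRing R] [Nontrivial R]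
    (M : Matrix (Fin 2) (Fin 2) R) {μ : R} (hμ : μ ^ 2 - M.trace * μ + M.det = 0) :
    μ ∈ spectrum R M :=
  M.mem_spectrum_of_isRoot_charpoly <| by simpa [M.charpoly_fin_two] using hμ

theorem exists_pos_quadratic_root_of_neg {t c : ℝ} (hc : c < 0) :
    ∃ x, 0 < x ∧ x ^ 2 - t * x + c = 0 := by
  have hD : 0 ≤ t ^ 2 - 4 * c := by nlinarith [sq_nonneg t]
  have hsqrt : |t| < √(t ^ 2 - 4 * c) := by
    rw [← Real.sqrt_sq_eq_abs]
    exact Real.sqrt_lt_sqrt (sq_nonneg t) (by linarith)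
  refine ⟨(t + √(t ^ 2 - 4 * c)) / 2, by linarith [neg_abs_le t], ?_⟩
  nlinarith [Real.sq_sqrt hD]

theorem Matrix.exists_pos_neg_mem_spectrum_of_det_neg (M : Matrix (Fin 2) (Fin 2) ℝ)
    (hM : M.det < 0) : ∃ μ ν : ℝ, μ ∈ spectrum ℝ M ∧ ν ∈ spectrum ℝ M ∧ 0 < μ ∧ ν < 0 := by
  obtain ⟨μ, hμ, hμroot⟩ := exists_pos_quadratic_root_of_neg (t := M.trace) hM
  obtain ⟨ν, hν, hνroot⟩ := exists_pos_quadratic_root_of_neg (t := -M.trace) hM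
  exact ⟨μ, -ν, M.mem_spectrum_of_sq_sub_trace_mul_add_det hμroot,
    M.mem_spectrum_of_sq_sub_trace_mul_add_det (by linear_combination hνroot), hμ, neg_neg_of_pos hν⟩

theorem Matrix.pow_symm_fin_two {K : Type*} [Field K] [NeZero (2 : K)] (x y : K) (k : ℕ) :
    !![x, y; y, x] ^ k = !![((x + y) ^ k + (x - y) ^ k) / 2, ((x + y) ^ k - (x - y) ^ k) / 2;
      ((x + y) ^ k - (x - y) ^ k) / 2, ((x + y) ^ k + (x - y) ^ k) / 2] := by
  induction k with
  | zero => ext i j; fin_cases i <;> fin_cases j <;> simp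
  | succ k ih =>
    rw [pow_succ, ih, Matrix.mul_fin_two]
    ext i j; fin_cases i <;> fin_cases j <;> simp <;> ring

theorem Matrix.det_symm_mul_single_mul_add_swap {R : Type*} [CommRing R] (a b c d : R) :
    (!![a, b; b, a] * !![1, 0; 0, 0] * !![c, d; d, c] +
      !![c, d; d, c] * !![1, 0; 0, 0] * !![a, b; b, a]).det = -(a * d - b * c) ^ 2 := by
  simp [Matrix.det_fin_two]
  ring

theorem det_pow_three_one_mul_single_mul_add_swap (r s : ℕ) :
    letI B : Matrix (Fin 2) (Fin 2) ℝ := !![3, 1; 1, 3]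
    (B ^ r * !![1, 0; 0, 0] * B ^ s + B ^ s * !![1, 0; 0, 0] * B ^ r).det =
      -(2 ^ r * 2 ^ s * (2 ^ r - 2 ^ s) / 2) ^ 2 := by
  rw [Matrix.pow_symm_fin_two, Matrix.pow_symm_fin_two, Matrix.det_symm_mul_single_mul_add_swap,
    show (3 : ℝ) + 1 = 2 ^ 2 by norm_num, show (3 : ℝ) - 1 = 2 by norm_num,
    pow_right_comm _ 2 r, pow_right_comm _ 2 s]
  ring

theorem stmt_15_general (r s : ℕ) (hrs : r ≠ s) :
    letI E : Matrix (Fin 2) (Fin 2) ℝ := !![1, 1; 1, 1]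
    letI F : Matrix (Fin 2) (Fin 2) ℝ := !![1, -1; -1, 1]
    letI B₁ : Matrix (Fin 2) (Fin 2) ℝ := (2 : ℝ) • E + F
    letI A₀ : Matrix (Fin 2) (Fin 2) ℝ := !![1, 0; 0, 0]
    letI M : Matrix (Fin 2) (Fin 2) ℝ := B₁ ^ r * A₀ * B₁ ^ s + B₁ ^ s * A₀ * B₁ ^ r
    letI γ : ℝ := 2 ^ r
    letI δ : ℝ := 2 ^ s
    M.det = -(4 : ℝ) ^ (r + s - 1) * (γ - δ) ^ 2 ∧ M.det < 0 ∧
      ∃ μ ν : ℝ, μ ∈ spectrum ℝ M ∧ ν ∈ spectrum ℝ M ∧ 0 < μ ∧ ν < 0 := by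
  have hB₁ : (2 : ℝ) • !![1, 1; 1, 1] + !![1, -1; -1, 1] = !![(3 : ℝ), 1; 1, 3] := by
    ext i j; fin_cases i <;> fin_cases j <;> norm_num
  have hdet := det_pow_three_one_mul_single_mul_add_swap r s
  have hγδ : (2 : ℝ) ^ r - 2 ^ s ≠ 0 :=
    sub_ne_zero.mpr fun h => hrs (Nat.pow_right_injective le_rfl (by exact_mod_cast h))
  have hneg : -((2 : ℝ) ^ r * 2 ^ s * (2 ^ r - 2 ^ s) / 2) ^ 2 < 0 := by
    simp only [Left.neg_neg_iff]
    positivity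
  obtain ⟨n, hn⟩ : ∃ n, r + s = n + 1 := Nat.exists_eq_add_one.mpr (by omega)
  simp only [hB₁, hdet]
  refine ⟨?_, hneg, Matrix.exists_pos_neg_mem_spectrum_of_det_neg _ (hdet ▸ hneg)⟩
  rw [hn, Nat.add_sub_cancel, ← pow_add, hn, show (4 : ℝ) = 2 ^ 2 by norm_num,
    pow_right_comm _ 2 n, pow_succ]
  ring

theorem stmt_15 (r s : ℕ) (hr : 0 < r) (hs : 0 < s) (hrs : r ≠ s) :
    letI E : Matrix (Fin 2) (Fin 2) ℝ := !![1, 1; 1, 1]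
    letI F : Matrix (Fin 2) (Fin 2) ℝ := !![1, -1; -1, 1]
    letI B₁ : Matrix (Fin 2) (Fin 2) ℝ := (2 : ℝ) • E + F
    letI A₀ : Matrix (Fin 2) (Fin 2) ℝ := !![1, 0; 0, 0]
    letI M : Matrix (Fin 2) (Fin 2) ℝ := B₁ ^ r * A₀ * B₁ ^ s + B₁ ^ s * A₀ * B₁ ^ r
    letI γ : ℝ := 2 ^ r
    letI δ : ℝ := 2 ^ s
    M.det = -(4 : ℝ) ^ (r + s - 1) * (γ - δ) ^ 2 ∧ M.det < 0 ∧
      ∃ μ ν : ℝ, μ ∈ spectrum ℝ M ∧ ν ∈ spectrum ℝ M ∧ 0 < μ ∧ ν < 0 :=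
  stmt_15_general r s hrs
end

section
/- Let H = ℂ^n (n ≥ 3), s > 0 an integer, and A a nonzero Hermitian n×n matrix of rank at least 2. Then there exists a Hermitian matrix B of rank at most 3 such that AB^s + B^s A has rank 3 and three distinct nonzero (real) eigenvalues. -/
/-!
Let `a`, `b` be nonzero eigenvalues of `A` at distinct indices `i`, `j` (they exist since
`rank A ≥ 2`), let `c` be the eigenvalue at a third index `k`, and let `W` be the isometry whose
columns are orthonormal eigenvectors for `i, k, j`, so that `A W = W D` with `D = diag(a, c, b)`.
For `B = W G Wᴴ` one gets `A B^s + B^s A = W (D G^s + G^s D) Wᴴ`, which has the same rank and the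
same nonzero eigenvalues as the `3 × 3` matrix `D G^s + G^s D`.

Take `G = G₁ ⊕ β`. If `a ≠ c`, let `G₁` be the projection onto `(1, 1)/√2`: it is idempotent, and
the `2 × 2` block becomes `[[a, (a+c)/2], [(a+c)/2, c]]`, whose determinant `-(a-c)²/4` is
negative, so its eigenvalues are real, distinct and nonzero. If `a = c`, then `G₁ = diag(1, 2)`
gives the block `2a · diag(1, 2^s)`. Finally `β ∈ ℕ` is chosen so that the third eigenvalue
`2bβ^s` avoids `0` and the two eigenvalues of the block; this is possible since `β ↦ 2bβ^s` is
injective.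
-/

open Matrix Polynomial

namespace Matrix

section LeftInverse

variable {R m k : Type*} [Fintype m] [Fintype k]

theorem mul_mul_pow_of_mul_eq_one [DecidableEq m] [DecidableEq k] [Semiring R]
    {W : Matrix m k R} {V : Matrix k m R} (hVW : V * W = 1) (N : Matrix k k R) {s : ℕ}
    (hs : s ≠ 0) : (W * N * V) ^ s = W * N ^ s * V := by
  obtain ⟨s, rfl⟩ := Nat.exists_eq_succ_of_ne_zero hs
  induction s with
  | zero => simp
  | succ s ih =>
    calc (W * N * V) ^ (s + 2) = W * N ^ (s + 1) * (V * W) * N * V := by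
          rw [pow_succ, ih s.succ_ne_zero]; simp only [Matrix.mul_assoc]
      _ = W * N ^ (s + 2) * V := by
          rw [hVW, Matrix.mul_one, pow_succ N (s + 1), Matrix.mul_assoc W]

theorem rank_mul_mul_of_mul_eq_one [DecidableEq k] [CommRing R] [StrongRankCondition R]
    {W : Matrix m k R} {V : Matrix k m R} (hVW : V * W = 1) (N : Matrix k k R) :
    (W * N * V).rank = N.rank := by
  refine le_antisymm ((rank_mul_le_left _ _).trans (rank_mul_le_right _ _)) ?_
  calc N.rank = (V * (W * N * V) * W).rank := by
        simp only [Matrix.mul_assoc]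
        rw [hVW, Matrix.mul_one, ← Matrix.mul_assoc, hVW, Matrix.one_mul]
    _ ≤ (W * N * V).rank := (rank_mul_le_left _ _).trans (rank_mul_le_right _ _)

theorem mem_spectrum_mul_mul_of_mul_eq_one [DecidableEq m] [DecidableEq k] [Field R]
    {W : Matrix m k R} {V : Matrix k m R} (hVW : V * W = 1) {N : Matrix k k R} {μ : R}
    (hμ : μ ≠ 0) (h : μ ∈ spectrum R N) : μ ∈ spectrum R (W * N * V) := by
  rw [mem_spectrum_iff_isRoot_charpoly] at h ⊢
  have key := congrArg (eval μ) (charpoly_mul_comm' W (N * V))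
  rw [Matrix.mul_assoc N V W, hVW, Matrix.mul_one, ← Matrix.mul_assoc] at key
  simpa [h.eq_zero, hμ] using key

theorem anticomm_pow_mul_mul_conjTranspose [DecidableEq m] [DecidableEq k] [Semiring R]
    [StarRing R] {A : Matrix m m R} {D : Matrix k k R} {W : Matrix m k R} (hA : A.IsHermitian)
    (hD : D.IsHermitian) (hW : Wᴴ * W = 1) (hAW : A * W = W * D) (G : Matrix k k R) {s : ℕ}
    (hs : s ≠ 0) :
    A * (W * G * Wᴴ) ^ s + (W * G * Wᴴ) ^ s * A = W * (D * G ^ s + G ^ s * D) * Wᴴ := by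
  have hWA : Wᴴ * A = D * Wᴴ := by
    simpa [conjTranspose_mul, hA.eq, hD.eq] using congrArg conjTranspose hAW
  rw [mul_mul_pow_of_mul_eq_one hW G hs]
  simp only [Matrix.mul_add, Matrix.add_mul, ← Matrix.mul_assoc, hAW]
  simp only [Matrix.mul_assoc, hWA]

end LeftInverse

theorem IsHermitian.exists_isometry_mul_eq_mul_diagonal {𝕜 n k : Type*} [RCLike 𝕜] [Fintype n]
    [DecidableEq n] [Fintype k] [DecidableEq k] {A : Matrix n n 𝕜} (hA : A.IsHermitian)
    (f : k ↪ n) :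
    ∃ W : Matrix n k 𝕜, Wᴴ * W = 1 ∧ A * W = W * diagonal fun i ↦ (hA.eigenvalues (f i) : 𝕜) := by
  obtain ⟨U, hU, hAU⟩ : ∃ U : Matrix n n 𝕜,
      Uᴴ * U = 1 ∧ A * U = U * diagonal fun i ↦ (hA.eigenvalues i : 𝕜) := by
    refine ⟨hA.eigenvectorUnitary, Unitary.coe_star_mul_self _, ?_⟩
    conv_lhs => enter [1]; rw [hA.spectral_theorem, Unitary.conjStarAlgAut_apply]
    simp only [Matrix.mul_assoc, Unitary.coe_star_mul_self, Matrix.mul_one]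
    rfl
  refine ⟨U.submatrix id f, ?_, ?_⟩
  · rw [conjTranspose_submatrix, ← submatrix_mul _ _ _ _ _ Function.bijective_id, hU,
      submatrix_one_embedding]
  · ext p q
    have hpq := congrFun (congrFun hAU p) (f q)
    simp only [mul_diagonal] at hpq ⊢
    rw [submatrix_apply, id, ← hpq]
    simp [mul_apply]

theorem isHermitian_diagonal_ofReal {ι : Type*} [DecidableEq ι] (d : ι → ℝ) :
    (diagonal fun i ↦ (d i : ℂ)).IsHermitian :=
  isHermitian_diagonal_iff.2 fun i ↦ Complex.conj_ofReal (d i)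

theorem charpoly_fin_two_eq_mul {R : Type*} [CommRing R] [Nontrivial R]
    (M : Matrix (Fin 2) (Fin 2) R) {x y : R} (htr : M.trace = x + y) (hdet : M.det = x * y) :
    M.charpoly = (X - C x) * (X - C y) := by
  rw [charpoly_fin_two, htr, hdet, map_add, map_mul]
  ring

theorem fromBlocks_anticomm_pow {R l m : Type*} [Semiring R] [Fintype l] [Fintype m]
    [DecidableEq l] [DecidableEq m] (D₁ G₁ : Matrix l l R) (D₂ G₂ : Matrix m m R) (s : ℕ) :
    fromBlocks D₁ 0 0 D₂ * fromBlocks G₁ 0 0 G₂ ^ s +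
        fromBlocks G₁ 0 0 G₂ ^ s * fromBlocks D₁ 0 0 D₂ =
      fromBlocks (D₁ * G₁ ^ s + G₁ ^ s * D₁) 0 0 (D₂ * G₂ ^ s + G₂ ^ s * D₂) := by
  simp [fromBlocks_diagonal_pow, fromBlocks_multiply, fromBlocks_add]

section ThreeEigenvalues

variable {ι κ : Type*} [Fintype ι] [DecidableEq ι] [Fintype κ] [DecidableEq κ]

def HasThreeDistinctNonzeroRealEigenvalues (M : Matrix ι ι ℂ) : Prop :=
  ∃ μ₁ μ₂ μ₃ : ℝ, μ₁ ≠ μ₂ ∧ μ₁ ≠ μ₃ ∧ μ₂ ≠ μ₃ ∧ μ₁ ≠ 0 ∧ μ₂ ≠ 0 ∧ μ₃ ≠ 0 ∧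
    (μ₁ : ℂ) ∈ spectrum ℂ M ∧ (μ₂ : ℂ) ∈ spectrum ℂ M ∧ (μ₃ : ℂ) ∈ spectrum ℂ M

theorem HasThreeDistinctNonzeroRealEigenvalues.mul_mul {N : Matrix κ κ ℂ}
    (hN : N.HasThreeDistinctNonzeroRealEigenvalues) {W : Matrix ι κ ℂ} {V : Matrix κ ι ℂ}
    (hVW : V * W = 1) : (W * N * V).HasThreeDistinctNonzeroRealEigenvalues := by
  obtain ⟨μ₁, μ₂, μ₃, h₁₂, h₁₃, h₂₃, h₁, h₂, h₃, hμ₁, hμ₂, hμ₃⟩ := hN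
  exact ⟨μ₁, μ₂, μ₃, h₁₂, h₁₃, h₂₃, h₁, h₂, h₃,
    mem_spectrum_mul_mul_of_mul_eq_one hVW (by exact_mod_cast h₁) hμ₁,
    mem_spectrum_mul_mul_of_mul_eq_one hVW (by exact_mod_cast h₂) hμ₂,
    mem_spectrum_mul_mul_of_mul_eq_one hVW (by exact_mod_cast h₃) hμ₃⟩

theorem isUnit_and_hasThreeDistinctNonzeroRealEigenvalues_of_charpoly_eq {M : Matrix ι ι ℂ}
    {x y z : ℝ} (hxy : x ≠ y) (hxz : x ≠ z) (hyz : y ≠ z) (hx : x ≠ 0) (hy : y ≠ 0) (hz : z ≠ 0)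
    (h : M.charpoly = (X - C (x : ℂ)) * (X - C (y : ℂ)) * (X - C (z : ℂ))) :
    IsUnit M ∧ M.HasThreeDistinctNonzeroRealEigenvalues := by
  have hspec (μ : ℂ) : μ ∈ spectrum ℂ M ↔ μ = x ∨ μ = y ∨ μ = z := by
    rw [mem_spectrum_iff_isRoot_charpoly, h]
    simp [sub_eq_zero, or_assoc]
  refine ⟨(spectrum.zero_notMem_iff ℂ).1 ?_, x, y, z, hxy, hxz, hyz, hx, hy, hz, ?_, ?_, ?_⟩ <;>
    simp [hspec, eq_comm, hx, hy, hz]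

end ThreeEigenvalues

end Matrix

theorem Real.exists_add_eq_mul_eq_of_neg (p : ℝ) {q : ℝ} (hq : q < 0) :
    ∃ x y : ℝ, x ≠ y ∧ x + y = p ∧ x * y = q := by
  have hdisc : 0 < p ^ 2 - 4 * q := by nlinarith [sq_nonneg p]
  set r := √(p ^ 2 - 4 * q)
  have hr : 0 < r := Real.sqrt_pos.2 hdisc
  have hr2 : r ^ 2 = p ^ 2 - 4 * q := Real.sq_sqrt hdisc.le
  exact ⟨(p + r) / 2, (p - r) / 2, by intro h; linarith, by ring, by linear_combination -hr2 / 4⟩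

theorem exists_isHermitian_charpoly_anticomm_pow_fin_two (e : Fin 2 → ℝ) (he : e 0 ≠ 0) {s : ℕ}
    (hs : s ≠ 0) :
    ∃ G : Matrix (Fin 2) (Fin 2) ℂ, G.IsHermitian ∧ ∃ x y : ℝ, x ≠ y ∧ x ≠ 0 ∧ y ≠ 0 ∧
      (diagonal (fun i ↦ (e i : ℂ)) * G ^ s + G ^ s * diagonal (fun i ↦ (e i : ℂ))).charpoly =
        (X - C (x : ℂ)) * (X - C (y : ℂ)) := by
  by_cases h : e 0 = e 1
  · have h2s : (1 : ℝ) < 2 ^ s := one_lt_pow₀ one_lt_two hs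
    refine ⟨diagonal ![1, 2], isHermitian_diagonal_of_self_adjoint _ ?_, 2 * e 0, 2 * e 0 * 2 ^ s,
      ?_, by positivity, by positivity, ?_⟩
    · ext i; fin_cases i <;> simp
    · rw [Ne, eq_comm, mul_eq_left₀ (by positivity)]
      exact h2s.ne'
    · apply charpoly_fin_two_eq_mul
      · simp only [diagonal_pow, diagonal_mul_diagonal, diagonal_add, trace_diagonal,
          Fin.sum_univ_two, Pi.pow_apply, h, cons_val_zero, cons_val_one, cons_val_fin_one]
        push_cast
        ring
      · simp only [diagonal_pow, diagonal_mul_diagonal, diagonal_add, det_diagonal,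
          Fin.prod_univ_two, Pi.pow_apply, h, cons_val_zero, cons_val_one, cons_val_fin_one]
        push_cast
        ring
  · have hq : -(e 0 - e 1) ^ 2 / 4 < 0 := by
      rw [neg_div, neg_lt_zero]
      have := sub_ne_zero.2 h
      positivity
    obtain ⟨x, y, hxy, hsum, hprod⟩ := Real.exists_add_eq_mul_eq_of_neg (e 0 + e 1) hq
    have hP : IsIdempotentElem !![(1 / 2 : ℂ), 1 / 2; 1 / 2, 1 / 2] := by
      ext i j; fin_cases i <;> fin_cases j <;> norm_num [mul_apply]
    refine ⟨!![1 / 2, 1 / 2; 1 / 2, 1 / 2], ?_, x, y, hxy, left_ne_zero_of_mul (hprod ▸ hq.ne),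
      right_ne_zero_of_mul (hprod ▸ hq.ne), ?_⟩
    · ext i j; fin_cases i <;> fin_cases j <;> simp
    rw [hP.pow_eq hs]
    apply charpoly_fin_two_eq_mul
    · have hsumC := congrArg ((↑) : ℝ → ℂ) hsum
      push_cast at hsumC
      simp only [trace_fin_two, Matrix.add_apply, diagonal_mul, mul_diagonal, of_apply, cons_val',
        cons_val_zero, cons_val_one, cons_val_fin_one, empty_val']
      linear_combination -hsumC
    · have hprodC := congrArg ((↑) : ℝ → ℂ) hprod
      push_cast at hprodC
      simp only [det_fin_two, Matrix.add_apply, diagonal_mul, mul_diagonal, of_apply, cons_val',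
        cons_val_zero, cons_val_one, cons_val_fin_one, empty_val']
      linear_combination -hprodC

theorem exists_isHermitian_isUnit_anticomm_pow (e : Fin 2 ⊕ Fin 1 → ℝ) (h₀ : e (.inl 0) ≠ 0)
    (h₁ : e (.inr 0) ≠ 0) {s : ℕ} (hs : s ≠ 0) :
    ∃ G : Matrix (Fin 2 ⊕ Fin 1) (Fin 2 ⊕ Fin 1) ℂ, G.IsHermitian ∧
      IsUnit (diagonal (fun p ↦ (e p : ℂ)) * G ^ s + G ^ s * diagonal (fun p ↦ (e p : ℂ))) ∧
      (diagonal (fun p ↦ (e p : ℂ)) * G ^ s +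
        G ^ s * diagonal (fun p ↦ (e p : ℂ))).HasThreeDistinctNonzeroRealEigenvalues := by
  obtain ⟨G₁, hG₁, x, y, hxy, hx, hy, hchar⟩ :=
    exists_isHermitian_charpoly_anticomm_pow_fin_two (fun i ↦ e (.inl i)) h₀ hs
  obtain ⟨β, hβ⟩ : ∃ β : ℕ, 2 * e (.inr 0) * ((β ^ s : ℕ) : ℝ) ∉ ({0, x, y} : Finset ℝ) := by
    have hinj : Function.Injective fun β : ℕ ↦ 2 * e (.inr 0) * ((β ^ s : ℕ) : ℝ) :=
      (mul_right_injective₀ (mul_ne_zero two_ne_zero h₁)).comp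
        (Nat.cast_injective.comp (Nat.pow_left_injective hs))
    obtain ⟨β, hβ⟩ := Infinite.exists_notMem_finset (({0, x, y} : Finset ℝ).preimage _ hinj.injOn)
    exact ⟨β, by simpa using hβ⟩
  simp only [Finset.mem_insert, Finset.mem_singleton, not_or] at hβ
  obtain ⟨hz, hzx, hzy⟩ := hβ
  have hD : diagonal (fun p ↦ (e p : ℂ)) =
      fromBlocks (diagonal fun i ↦ (e (.inl i) : ℂ)) 0 0 (diagonal fun i ↦ (e (.inr i) : ℂ)) := by
    rw [fromBlocks_diagonal]
    congr
    ext (p | p) <;> rfl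
  refine ⟨fromBlocks G₁ 0 0 (diagonal fun _ ↦ ((β : ℝ) : ℂ)),
    hG₁.fromBlocks (by simp) (isHermitian_diagonal_ofReal _), ?_⟩
  refine isUnit_and_hasThreeDistinctNonzeroRealEigenvalues_of_charpoly_eq hxy (Ne.symm hzx)
    (Ne.symm hzy) hx hy hz ?_
  rw [hD, fromBlocks_anticomm_pow, charpoly_fromBlocks_zero₁₂, hchar]
  simp only [diagonal_pow, diagonal_mul_diagonal, diagonal_add, charpoly_diagonal,
    Finset.univ_unique, Finset.prod_singleton]
  congr 3
  simp only [Pi.pow_apply, Fin.default_eq_zero]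
  push_cast
  ring

theorem stmt_16_general (n : ℕ) (hn : 3 ≤ n) (s : ℕ) (hs : 0 < s)
    (A : Matrix (Fin n) (Fin n) ℂ) (hA : A.IsHermitian)
    (hrk : 2 ≤ A.rank) :
    ∃ B : Matrix (Fin n) (Fin n) ℂ, B.IsHermitian ∧ B.rank ≤ 3 ∧
      (A * B ^ s + B ^ s * A).rank = 3 ∧
      ∃ μ₁ μ₂ μ₃ : ℝ, μ₁ ≠ μ₂ ∧ μ₁ ≠ μ₃ ∧ μ₂ ≠ μ₃ ∧
        μ₁ ≠ 0 ∧ μ₂ ≠ 0 ∧ μ₃ ≠ 0 ∧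
        (μ₁ : ℂ) ∈ spectrum ℂ (A * B ^ s + B ^ s * A) ∧
        (μ₂ : ℂ) ∈ spectrum ℂ (A * B ^ s + B ^ s * A) ∧
        (μ₃ : ℂ) ∈ spectrum ℂ (A * B ^ s + B ^ s * A) := by
  obtain ⟨⟨i, hi⟩, ⟨j, hj⟩, hij⟩ :=
    Fintype.exists_pair_of_one_lt_card (hA.rank_eq_card_non_zero_eigs ▸ hrk)
  obtain ⟨k, hki, hkj⟩ := Fin.exists_ne_and_ne_of_two_lt i j hn
  let f : Fin 2 ⊕ Fin 1 ↪ Fin n := ⟨Sum.elim ![i, k] ![j], by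
    rintro (p | p) (q | q) h <;> fin_cases p <;> fin_cases q <;> simp_all [eq_comm]⟩
  obtain ⟨W, hW, hAW⟩ := hA.exists_isometry_mul_eq_mul_diagonal f
  obtain ⟨G, hG, hunit, hthree⟩ :=
    exists_isHermitian_isUnit_anticomm_pow (fun p ↦ hA.eigenvalues (f p)) hi hj hs.ne'
  refine ⟨W * G * Wᴴ, isHermitian_mul_mul_conjTranspose W hG, ?_, ?_⟩
  · rw [rank_mul_mul_of_mul_eq_one hW]
    exact (rank_le_card_width G).trans (by simp)
  · rw [anticomm_pow_mul_mul_conjTranspose hA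
      (isHermitian_diagonal_ofReal fun p ↦ hA.eigenvalues (f p)) hW hAW G hs.ne',
      rank_mul_mul_of_mul_eq_one hW, rank_of_isUnit _ hunit]
    exact ⟨by simp, hthree.mul_mul hW⟩

theorem stmt_16 (n : ℕ) (hn : 3 ≤ n) (s : ℕ) (hs : 0 < s)
    (A : Matrix (Fin n) (Fin n) ℂ) (hA : A.IsHermitian) (hA0 : A ≠ 0)
    (hrk : 2 ≤ A.rank) :
    ∃ B : Matrix (Fin n) (Fin n) ℂ, B.IsHermitian ∧ B.rank ≤ 3 ∧
      (A * B ^ s + B ^ s * A).rank = 3 ∧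
      ∃ μ₁ μ₂ μ₃ : ℝ, μ₁ ≠ μ₂ ∧ μ₁ ≠ μ₃ ∧ μ₂ ≠ μ₃ ∧
        μ₁ ≠ 0 ∧ μ₂ ≠ 0 ∧ μ₃ ≠ 0 ∧
        (μ₁ : ℂ) ∈ spectrum ℂ (A * B ^ s + B ^ s * A) ∧
        (μ₂ : ℂ) ∈ spectrum ℂ (A * B ^ s + B ^ s * A) ∧
        (μ₃ : ℂ) ∈ spectrum ℂ (A * B ^ s + B ^ s * A) :=
  stmt_16_general n hn s hs A hA hrk
end

section
/- Let A be an n×n complex matrix (n ≥ 3) such that the set {x, Ax, A²x} is linearly dependent for every x ∈ ℂ^n. Then A satisfies a quadratic polynomial: there exist scalars a, b, c, not all zero, with aA² + bA + cI = 0. -/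
/-!
For a single vector `x`, the polynomials `p` with `p(A) x = 0` form an ideal containing the minimal
polynomial `μ` of `A`, so a nonzero quadratic in it can be replaced by its monic gcd with `μ`.
Hence every `x` lies in the kernel of `q(A)` for one of the finitely many monic divisors `q` of `μ`
of degree at most two. A vector space over an infinite field is not a finite union of proper
subspaces, so one of these kernels is the whole space, i.e. `q(A) = 0`.
-/

open Polynomial

theorem Polynomial.aeval_eq_of_natDegree_le_two {R A : Type*} [CommSemiring R] [Semiring A]
    [Algebra R A] {p : R[X]} (hp : p.natDegree ≤ 2) (a : A) :
    aeval a p = p.coeff 2 • a ^ 2 + p.coeff 1 • a + p.coeff 0 • (1 : A) := by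
  rw [aeval_eq_sum_range' (Nat.lt_succ_of_le hp)]
  simp only [Finset.sum_range_succ, Finset.sum_range_zero, zero_add, pow_zero, pow_one]
  abel

theorem Polynomial.finite_setOf_monic_dvd {K : Type*} [Field K] {μ : K[X]} (hμ : μ ≠ 0) :
    {g : K[X] | g.Monic ∧ g ∣ μ}.Finite :=
  @Finite.of_fintype _ (fintypeSubtypeMonicDvd μ hμ)

namespace Module.End

variable {K V : Type*} [Field K] [AddCommGroup V] [Module K V]

theorem exists_aeval_apply_eq_zero_of_not_linearIndependent (f : Module.End K V) {k : ℕ} {x : V}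
    (h : ¬ LinearIndependent K fun i : Fin (k + 1) => (f ^ (i : ℕ)) x) :
    ∃ p : K[X], p ≠ 0 ∧ p.natDegree ≤ k ∧ aeval f p x = 0 := by
  obtain ⟨g, hg, i, hgi⟩ := Fintype.not_linearIndependent_iff.mp h
  refine ⟨∑ j : Fin (k + 1), monomial (j : ℕ) (g j), fun h0 => hgi ?_, ?_, ?_⟩
  · simpa [finsetSum_coeff, coeff_monomial, Fin.val_inj] using congrArg (coeff · i) h0
  · refine natDegree_sum_le_of_forall_le _ _ fun j _ => (natDegree_monomial_le _).trans ?_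
    exact Nat.lt_succ_iff.mp j.isLt
  · simpa [map_sum, aeval_monomial, Algebra.smul_def] using hg

theorem exists_monic_dvd_aeval_apply_eq_zero (f : Module.End K V) {x : V} {p q : K[X]}
    (hp : p ≠ 0) (hpx : aeval f p x = 0) (hqx : aeval f q x = 0) :
    ∃ d : K[X], d.Monic ∧ d ∣ p ∧ d ∣ q ∧ aeval f d x = 0 := by
  classical
  refine ⟨gcd p q, ?_, gcd_dvd_left p q, gcd_dvd_right p q, ?_⟩
  · rw [← normalize_gcd]
    exact monic_normalize (gcd_ne_zero_of_left hp)
  · obtain ⟨a, b, hab⟩ := exists_gcd_eq_mul_add_mul p q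
    simp [hab, mul_comm p, mul_comm q, Module.End.mul_apply, hpx, hqx]

theorem exists_monic_natDegree_le_aeval_eq_zero [Infinite K] [FiniteDimensional K V]
    (f : Module.End K V) (k : ℕ)
    (h : ∀ x, ∃ p : K[X], p ≠ 0 ∧ p.natDegree ≤ k ∧ aeval f p x = 0) :
    ∃ p : K[X], p.Monic ∧ p.natDegree ≤ k ∧ aeval f p = 0 := by
  set μ := minpoly K f
  have hμ : μ ≠ 0 := minpoly.ne_zero (Algebra.IsIntegral.isIntegral f)
  set S := {g : K[X] | g.Monic ∧ g ∣ μ ∧ g.natDegree ≤ k}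
  have : Finite S := ((finite_setOf_monic_dvd hμ).subset fun g hg => ⟨hg.1, hg.2.1⟩).to_subtype
  have hcover : ⋃ g : S, (LinearMap.ker (aeval f g.1) : Set V) = Set.univ := by
    refine Set.eq_univ_of_forall fun x => Set.mem_iUnion.mpr ?_
    obtain ⟨p, hp, hpk, hpx⟩ := h x
    obtain ⟨d, hd, hdp, hdμ, hdx⟩ := exists_monic_dvd_aeval_apply_eq_zero f hp hpx
      (by rw [minpoly.aeval K f, LinearMap.zero_apply])
    exact ⟨⟨d, hd, hdμ, (natDegree_le_of_dvd hdp hp).trans hpk⟩, hdx⟩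
  obtain ⟨⟨g, hg, _, hgk⟩, hker⟩ := Subspace.exists_eq_top_of_iUnion_eq_univ hcover
  exact ⟨g, hg, hgk, LinearMap.ker_eq_top.mp hker⟩

end Module.End

theorem stmt_19_general (n : ℕ) (A : Matrix (Fin n) (Fin n) ℂ)
    (h : ∀ x : Fin n → ℂ, ¬ LinearIndependent ℂ ![x, A.mulVec x, (A ^ 2).mulVec x]) :
    ∃ a b c : ℂ, ¬ (a = 0 ∧ b = 0 ∧ c = 0) ∧
      a • A ^ 2 + b • A + c • (1 : Matrix (Fin n) (Fin n) ℂ) = 0 := by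
  have horbit (x : Fin n → ℂ) :
      ![x, A.mulVec x, (A ^ 2).mulVec x] = fun i : Fin 3 => (Matrix.toLin' A ^ (i : ℕ)) x := by
    ext i : 1
    fin_cases i <;> simp [← Matrix.toLin'_pow]
  obtain ⟨p, hp, hp2, hpA⟩ := Module.End.exists_monic_natDegree_le_aeval_eq_zero
    (Matrix.toLin' A) 2
    fun x => Module.End.exists_aeval_apply_eq_zero_of_not_linearIndependent _ (horbit x ▸ h x)
  have hpA' : aeval A p = 0 :=
    Matrix.toLinAlgEquiv'.injective <| by rw [← aeval_algHom_apply, map_zero]; exact hpA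
  refine ⟨p.coeff 2, p.coeff 1, p.coeff 0, fun ⟨h2, h1, h0⟩ => ?_,
    aeval_eq_of_natDegree_le_two hp2 A ▸ hpA'⟩
  have hlead := hp.coeff_natDegree
  interval_cases p.natDegree <;> simp_all

theorem stmt_19 (n : ℕ) (hn : 3 ≤ n) (A : Matrix (Fin n) (Fin n) ℂ)
    (h : ∀ x : Fin n → ℂ, ¬ LinearIndependent ℂ ![x, A.mulVec x, (A ^ 2).mulVec x]) :
    ∃ a b c : ℂ, ¬ (a = 0 ∧ b = 0 ∧ c = 0) ∧
      a • A ^ 2 + b • A + c • (1 : Matrix (Fin n) (Fin n) ℂ) = 0 :=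
  stmt_19_general n A h
end
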